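/- arXiv:1008.2380 — 2 statements merged into one kernel-verified Lean document; each statement's English description precedes it below -/
import Mathlib

section
/- For the natural representation of sl₂(ℂ) on the free Lie algebra L on a, b: the space of Lie invariants of degree 2 is one-dimensional, spanned by [b,a], and the space of Lie invariants of degree 4 is zero. -/
/-!
Setting: the free Lie algebra `FL` over ℂ on two generators `a < b`, with the simple
Lie algebra sl₂(ℂ) (standard basis x, h, y, with ⁅h,x⁆ = 2x, ⁅h,y⁆ = −2y, ⁅x,y⁆ = h)
acting on `FL` by derivations extending its natural representation on the span of the
generators:  x.a = 0, x.b = a, h.a = a, h.b = −b, y.a = b, y.b = 0.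
The derivations `X H Y` realizing these actions are uniquely determined by their values
on the generators, so we quantify over derivations with the prescribed generator values.
-/

noncomputable section

/-- The free Lie algebra over ℂ on two generators. -/
abbrev FL : Type := FreeLieAlgebra ℂ (Fin 2)

/-- The generator `a`. -/
def genA : FL := FreeLieAlgebra.of ℂ 0

/-- The generator `b`. -/
def genB : FL := FreeLieAlgebra.of ℂ 1

/-- Interpret a nonassociative word on the generators as a Lie monomial in `FL`. -/
def magmaToLie : FreeMagma (Fin 2) → FL
  | .of i => FreeLieAlgebra.of ℂ i
  | .mul t u => ⁅magmaToLie t, magmaToLie u⁆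

/-- The homogeneous component `L_j`: the span of the Lie monomials of degree `j`. -/
def homog (j : ℕ) : Submodule ℂ FL :=
  Submodule.span ℂ (magmaToLie '' {t | t.length = j})

/-- The weight space `L_j^w`: the eigenspace of the `h`-action on `L_j`
with eigenvalue `w`. -/
def wtsp (H : LieDerivation ℂ FL FL) (j : ℕ) (w : ℤ) : Submodule ℂ FL :=
  homog j ⊓ Module.End.eigenspace (H.toLinearMap) (w : ℂ)

/-- The space of Lie invariants of degree `j`: elements of `L_j` annihilated by every
element of sl₂(ℂ), equivalently by the actions of the basis elements x, h, y. -/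
def invariants (X H Y : LieDerivation ℂ FL FL) (j : ℕ) : Submodule ℂ FL :=
  homog j ⊓ LinearMap.ker X.toLinearMap ⊓ LinearMap.ker H.toLinearMap ⊓
    LinearMap.ker Y.toLinearMap

/-- The Lie subalgebra of `FL` generated by the invariants of degree `< j`.
An invariant of degree `j` is primitive iff it does not belong to this subalgebra. -/
def lowerInv (X H Y : LieDerivation ℂ FL FL) (j : ℕ) : LieSubalgebra ℂ FL :=
  LieSubalgebra.lieSpan ℂ FL (⋃ i < j, (invariants X H Y i : Set FL))

/-!
`L₂` is spanned by `q = ⁅b, a⁆`, `L₃` by `u = ⁅a, q⁆` and `v = ⁅b, q⁆`, and `L₄` by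
`w₁ = ⁅a, u⁆`, `w₂ = ⁅b, u⁆`, `w₃ = ⁅b, v⁆`: the remaining brackets reduce to these by
skew-symmetry, `⁅q, q⁆ = 0` and the Jacobi identity `⁅a, v⁆ = ⁅b, u⁆`.
On `L₄` the derivations act as on the adjoint representation, `x w₁ = 0`, `x w₂ = w₁`,
`x w₃ = 2 w₂`, `y w₁ = 2 w₂`, so a vector killed by `x` and `y` vanishes once `w₁, w₂` are
linearly independent. That independence, and `q ≠ 0`, are read off the representation
`a ↦ E₀₀`, `b ↦ E₀₁ + E₁₂` in `gl₃(ℂ)`, where `q, w₁ ↦ -E₀₁` and `w₂ ↦ E₀₂`.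
-/

open Submodule

section
variable {R L : Type*} [CommRing R] [LieRing L] [LieAlgebra R L]

theorem lie_mem_span_of_forall_mem {S T U : Set L} {x y : L} (hx : x ∈ span R S)
    (hy : y ∈ span R T) (h : ∀ s ∈ S, ∀ t ∈ T, ⁅s, t⁆ ∈ span R U) : ⁅x, y⁆ ∈ span R U := by
  induction hx using span_induction with
  | mem s hs =>
    induction hy using span_induction with
    | mem t ht => exact h s hs t ht
    | zero => simp
    | add _ _ _ _ h₁ h₂ => rw [lie_add]; exact add_mem h₁ h₂
    | smul c _ _ h₁ => rw [lie_smul]; exact smul_mem _ c h₁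
  | zero => simp
  | add _ _ _ _ h₁ h₂ => rw [add_lie]; exact add_mem h₁ h₂
  | smul c _ _ h₁ => rw [smul_lie]; exact smul_mem _ c h₁

theorem lie_mem_span_comm {S : Set L} {x y : L} : ⁅x, y⁆ ∈ span R S ↔ ⁅y, x⁆ ∈ span R S := by
  rw [← lie_skew, neg_mem_iff]
end

theorem magmaToLie_mem_homog {t : FreeMagma (Fin 2)} {j : ℕ} (ht : t.length = j) :
    magmaToLie t ∈ homog j :=
  subset_span ⟨t, ht, rfl⟩

theorem homog_one_le : homog 1 ≤ span ℂ {genA, genB} := by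
  refine span_le.2 ?_
  rintro _ ⟨t, ht, rfl⟩
  cases t with
  | of i => fin_cases i <;> exact subset_span (by simp [magmaToLie, genA, genB])
  | mul u v =>
    have := u.length_pos
    have := v.length_pos
    simp [FreeMagma.length] at ht; omega

-- By skew-symmetry only brackets with the shorter factor on the left need checking.
theorem homog_le_span_of_forall_lie {j : ℕ} (hj : j ≠ 1) {S : Set FL}
    (h : ∀ u v : FreeMagma (Fin 2), u.length + v.length = j → u.length ≤ v.length →
      ⁅magmaToLie u, magmaToLie v⁆ ∈ span ℂ S) : homog j ≤ span ℂ S := by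
  refine span_le.2 ?_
  rintro _ ⟨t, ht : t.length = j, rfl⟩
  cases t with
  | of i => exact absurd ht.symm hj
  | mul u v =>
    rcases le_total u.length v.length with huv | hvu
    · exact h u v ht huv
    · exact lie_mem_span_comm.1 (h v u (by rw [← ht, FreeMagma.length, add_comm]) hvu)

namespace FL

def q : FL := ⁅genB, genA⁆
def u : FL := ⁅genA, q⁆
def v : FL := ⁅genB, q⁆
def w₁ : FL := ⁅genA, u⁆
def w₂ : FL := ⁅genB, u⁆
def w₃ : FL := ⁅genB, v⁆

theorem lie_genA_genB : ⁅genA, genB⁆ = -q := by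
  rw [q, ← lie_skew]

theorem lie_genA_v : ⁅genA, v⁆ = w₂ := by
  rw [v, leibniz_lie, lie_genA_genB, neg_lie, lie_self, neg_zero, zero_add, ← u, ← w₂]

theorem homog_two_le : homog 2 ≤ span ℂ {q} := by
  refine homog_le_span_of_forall_lie (by norm_num) fun s t hst hle => ?_
  have := s.length_pos
  refine lie_mem_span_of_forall_mem (homog_one_le (magmaToLie_mem_homog (by omega)))
    (homog_one_le (magmaToLie_mem_homog (by omega))) ?_
  simp only [Set.mem_insert_iff, Set.mem_singleton_iff]
  rintro _ (rfl | rfl) _ (rfl | rfl)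
  · simp
  · simp [lie_genA_genB, mem_span_singleton_self]
  · exact mem_span_singleton_self q
  · simp

theorem homog_three_le : homog 3 ≤ span ℂ {u, v} := by
  refine homog_le_span_of_forall_lie (by norm_num) fun s t hst hle => ?_
  have := s.length_pos
  refine lie_mem_span_of_forall_mem (homog_one_le (magmaToLie_mem_homog (by omega)))
    (homog_two_le (magmaToLie_mem_homog (by omega))) ?_
  simp only [Set.mem_insert_iff, Set.mem_singleton_iff]
  rintro _ (rfl | rfl) _ rfl
  · exact subset_span (by simp [u])
  · exact subset_span (by simp [v])

theorem homog_four_le : homog 4 ≤ span ℂ {w₁, w₂, w₃} := by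
  refine homog_le_span_of_forall_lie (by norm_num) fun s t hst hle => ?_
  have := s.length_pos
  obtain hs | hs : s.length = 1 ∨ s.length = 2 := by omega
  · refine lie_mem_span_of_forall_mem (homog_one_le (magmaToLie_mem_homog hs))
      (homog_three_le (magmaToLie_mem_homog (by omega))) ?_
    simp only [Set.mem_insert_iff, Set.mem_singleton_iff]
    rintro _ (rfl | rfl) _ (rfl | rfl)
    · exact subset_span (by simp [w₁])
    · exact subset_span (by simp [lie_genA_v])
    · exact subset_span (by simp [w₂])
    · exact subset_span (by simp [w₃])
  · refine lie_mem_span_of_forall_mem (homog_two_le (magmaToLie_mem_homog hs))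
      (homog_two_le (magmaToLie_mem_homog (by omega))) ?_
    simp

section Derivations

variable {D : LieDerivation ℂ FL FL}

theorem raising_apply_q (hDa : D genA = 0) (hDb : D genB = genA) : D q = 0 := by
  simp [q, hDa, hDb]

theorem lowering_apply_q (hDa : D genA = genB) (hDb : D genB = 0) : D q = 0 := by
  simp [q, hDa, hDb]

theorem weight_apply_q (hDa : D genA = genA) (hDb : D genB = -genB) : D q = 0 := by
  simp [q, hDa, hDb]

theorem raising_apply_w (hDa : D genA = 0) (hDb : D genB = genA) :
    D w₁ = 0 ∧ D w₂ = w₁ ∧ D w₃ = 2 • w₂ := by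
  have hq := raising_apply_q hDa hDb
  have hu : D u = 0 := by simp [u, hDa, hq]
  have hv : D v = u := by simp [v, hDb, hq, u]
  refine ⟨by simp [w₁, hDa, hu], by simp [w₂, hDb, hu, w₁], ?_⟩
  rw [w₃, LieDerivation.apply_lie_eq_add, hDb, hv, lie_genA_v, two_smul, w₂]

theorem lowering_apply_w₁ (hDa : D genA = genB) (hDb : D genB = 0) : D w₁ = 2 • w₂ := by
  have hu : D u = v := by simp [u, hDa, lowering_apply_q hDa hDb, v]
  rw [w₁, LieDerivation.apply_lie_eq_add, hDa, hu, lie_genA_v, two_smul, w₂]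

end Derivations

section Representation

attribute [local instance] LieRing.ofAssociativeRing

def toMatrix : FL →ₗ⁅ℂ⁆ Matrix (Fin 3) (Fin 3) ℂ :=
  FreeLieAlgebra.lift ℂ ![Matrix.single 0 0 1, Matrix.single 0 1 1 + Matrix.single 1 2 1]

theorem toMatrix_q : toMatrix q = -Matrix.single 0 1 1 := by
  simp [toMatrix, q, genA, genB, Ring.lie_def, add_mul, mul_add,
    Matrix.single_mul_single_same]

theorem toMatrix_w₁ : toMatrix w₁ = -Matrix.single 0 1 1 := by
  simp [toMatrix, w₁, u, q, genA, genB, Ring.lie_def, add_mul, mul_add,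
    Matrix.single_mul_single_same]

theorem toMatrix_w₂ : toMatrix w₂ = Matrix.single 0 2 1 := by
  simp [toMatrix, w₂, u, q, genA, genB, Ring.lie_def, add_mul, mul_add,
    Matrix.single_mul_single_same]

theorem q_ne_zero : q ≠ 0 := fun h => by
  simpa [h] using congr_fun₂ toMatrix_q 0 1

theorem linearIndependent_w₁_w₂ : LinearIndependent ℂ ![w₁, w₂] := by
  refine LinearIndependent.pair_iff.2 fun s t hst => ?_
  have hst' := congr_arg toMatrix hst
  simp only [map_add, map_smul, map_zero, toMatrix_w₁, toMatrix_w₂] at hst'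
  exact ⟨by simpa using congr_fun₂ hst' 0 1, by simpa using congr_fun₂ hst' 0 2⟩

end Representation

theorem eq_zero_of_mem_span_w {X Y : LieDerivation ℂ FL FL}
    (hXa : X genA = 0) (hXb : X genB = genA) (hYa : Y genA = genB) (hYb : Y genB = 0)
    {x : FL} (hx : x ∈ span ℂ {w₁, w₂, w₃}) (hXx : X x = 0) (hYx : Y x = 0) : x = 0 := by
  obtain ⟨c, _, hz, rfl⟩ := mem_span_insert.1 hx
  obtain ⟨d, e, rfl⟩ := mem_span_pair.1 hz
  obtain ⟨hXw₁, hXw₂, hXw₃⟩ := raising_apply_w hXa hXb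
  have hde : d = 0 ∧ 2 * e = 0 := by
    refine LinearIndependent.pair_iff.1 linearIndependent_w₁_w₂ d (2 * e) ?_
    rw [← hXx]
    simp only [map_add, map_smul, hXw₁, hXw₂, hXw₃]
    module
  obtain ⟨rfl, rfl⟩ : d = 0 ∧ e = 0 := ⟨hde.1, by simpa using hde.2⟩
  have hw₂ : w₂ ≠ 0 := linearIndependent_w₁_w₂.ne_zero 1
  have hc : (2 * c) • w₂ = 0 := by
    rw [← hYx]
    simp only [zero_smul, add_zero, map_smul, lowering_apply_w₁ hYa hYb]
    module
  obtain rfl : c = 0 := by simpa [hw₂] using hc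
  simp

end FL

open FL

theorem invariants_two_eq {X H Y : LieDerivation ℂ FL FL}
    (hXa : X genA = 0) (hXb : X genB = genA)
    (hHa : H genA = genA) (hHb : H genB = -genB)
    (hYa : Y genA = genB) (hYb : Y genB = 0) : invariants X H Y 2 = span ℂ {q} := by
  refine le_antisymm (fun x hx => homog_two_le hx.1.1.1) (span_le.2 ?_)
  rintro _ rfl
  exact ⟨⟨⟨magmaToLie_mem_homog (t := .mul (.of 1) (.of 0)) rfl, raising_apply_q hXa hXb⟩,
    weight_apply_q hHa hHb⟩, lowering_apply_q hYa hYb⟩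

theorem invariants_four_eq_bot {X H Y : LieDerivation ℂ FL FL}
    (hXa : X genA = 0) (hXb : X genB = genA)
    (hYa : Y genA = genB) (hYb : Y genB = 0) : invariants X H Y 4 = ⊥ :=
  eq_bot_iff.2 fun _ hx => eq_zero_of_mem_span_w hXa hXb hYa hYb
    (homog_four_le hx.1.1.1) hx.1.1.2 hx.2

/-- For the natural representation of sl₂(ℂ) on the free Lie algebra on `a, b`:
the space of Lie invariants of degree 2 is one-dimensional, spanned by `[b,a]`,
and the space of Lie invariants of degree 4 is zero. -/
theorem invariants_degree_two_and_four
    (X H Y : LieDerivation ℂ FL FL)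
    (hXa : X genA = 0) (hXb : X genB = genA)
    (hHa : H genA = genA) (hHb : H genB = -genB)
    (hYa : Y genA = genB) (hYb : Y genB = 0) :
    invariants X H Y 2 = Submodule.span ℂ {⁅genB, genA⁆} ∧ ⁅genB, genA⁆ ≠ (0 : FL) ∧
    invariants X H Y 4 = ⊥ :=
  ⟨invariants_two_eq hXa hXb hHa hHb hYa hYb, q_ne_zero,
    invariants_four_eq_bot hXa hXb hYa hYb⟩
end
end

section
/- For the natural representation of sl₂(ℂ) on the free Lie algebra L on a, b, the space of Lie invariants of degree 6 is one-dimensional, spanned by I₆ = [[[b,a],b],[[b,a],a]]. -/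
/-!
Setting: the free Lie algebra `FL` over ℂ on two generators `a < b`, with the simple
Lie algebra sl₂(ℂ) (standard basis x, h, y, with ⁅h,x⁆ = 2x, ⁅h,y⁆ = −2y, ⁅x,y⁆ = h)
acting on `FL` by derivations extending its natural representation on the span of the
generators:  x.a = 0, x.b = a, h.a = a, h.b = −b, y.a = b, y.b = 0.
The derivations `X H Y` realizing these actions are uniquely determined by their values
on the generators, so we quantify over derivations with the prescribed generator values.
-/

noncomputable section

/-- `[b,a]` -/
def ba : FL := ⁅genB, genA⁆
/-- `[[b,a],a]` -/
def baa : FL := ⁅ba, genA⁆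
/-- `[[b,a],b]` -/
def bab : FL := ⁅ba, genB⁆
/-- `[[[b,a],a],a]` -/
def baaa : FL := ⁅baa, genA⁆
/-- `[[[b,a],a],b]` -/
def baab : FL := ⁅baa, genB⁆
/-- `[[[b,a],b],b]` -/
def babb : FL := ⁅bab, genB⁆

/-- `I₆ = [[[b,a],b],[[b,a],a]]` -/
def I6 : FL := ⁅bab, baa⁆

/-!
Up to the Jacobi identity every Lie monomial of degree 6 is a combination of nine monomials,
each an eigenvector of `h` whose eigenvalue is its number of `a`s minus its number of `b`s.
Since eigenvectors of distinct eigenvalues are independent, an element killed by `h` lies in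
the span of the three monomials of weight 0: `[[[[[b,a],a],a],b],b]`, `[[b,a],[[[b,a],a],b]]`
and `I₆`. The operator `x` sends them to `2u - w`, `w` and `0`, where `u = [[[[[b,a],a],a],a],b]`
and `w = [[b,a],[[[b,a],a],a]]` are independent (their images under `a ↦ E₁₁ + E₂₃`,
`b ↦ E₁₂ - E₂₂` in `gl₃` are `-E₁₂` and `-E₁₃`), so only the multiples of `I₆` survive; and
`I₆` is indeed killed by `x`, `h` and `y`.
-/

section LeftNormed

variable (R : Type*) {L : Type*} [CommRing R] [LieRing L] [LieAlgebra R L]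

def leftNormedSpan (s : Set L) : ℕ → Submodule R L
  | 0 => ⊥
  | 1 => Submodule.span R s
  | n + 2 => Submodule.span R (Set.image2 (⁅·, ·⁆) (leftNormedSpan s (n + 1) : Set L) s)

variable {R} {s : Set L}

lemma lie_mem_leftNormedSpan_add_one {n : ℕ} {x y : L} (hx : x ∈ leftNormedSpan R s n)
    (hy : y ∈ Submodule.span R s) : ⁅x, y⁆ ∈ leftNormedSpan R s (n + 1) := by
  induction hy using Submodule.span_induction with
  | mem z hz =>
    match n, hx with
    | 0, hx => simp_all [leftNormedSpan]
    | n + 1, hx => exact Submodule.subset_span ⟨x, hx, z, hz, rfl⟩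
  | zero => simp
  | add y z _ _ hy hz => simpa only [lie_add] using add_mem hy hz
  | smul c y _ hy => simpa only [lie_smul] using Submodule.smul_mem _ c hy

lemma lie_mem_leftNormedSpan {i j : ℕ} {x y : L} (hx : x ∈ leftNormedSpan R s i)
    (hy : y ∈ leftNormedSpan R s j) : ⁅x, y⁆ ∈ leftNormedSpan R s (i + j) := by
  induction j using Nat.strong_induction_on generalizing i x y with
  | _ j ih =>
  obtain _ | _ | j := j
  · simp_all [leftNormedSpan]
  · exact lie_mem_leftNormedSpan_add_one hx hy
  rw [leftNormedSpan] at hy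
  induction hy using Submodule.span_induction with
  | mem y hy =>
    obtain ⟨q, hq, z, hz, rfl⟩ := hy
    have hz' : z ∈ leftNormedSpan R s 1 := Submodule.subset_span hz
    rw [leibniz_lie, ← lie_skew q]
    refine add_mem ?_ (neg_mem ?_)
    · exact lie_mem_leftNormedSpan_add_one (ih (j + 1) (by omega) hx hq) hz'
    · convert ih (j + 1) (by omega) (ih 1 (by omega) hx hz') hq using 2
      omega
  | zero => simp
  | add y z _ _ hy hz => simpa only [lie_add] using add_mem hy hz
  | smul c y _ hy => simpa only [lie_smul] using Submodule.smul_mem _ c hy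

lemma leftNormedSpan_add_two_le {n : ℕ} {U : Set L} {T : Submodule R L}
    (hn : leftNormedSpan R s (n + 1) ≤ Submodule.span R U)
    (hU : ∀ u ∈ U, ∀ z ∈ s, ⁅u, z⁆ ∈ T) : leftNormedSpan R s (n + 2) ≤ T := by
  rw [leftNormedSpan, Submodule.span_le]
  rintro _ ⟨x, hx, z, hz, rfl⟩
  suffices ∀ y ∈ Submodule.span R U, ⁅y, z⁆ ∈ T from this x (hn hx)
  intro y hy
  induction hy using Submodule.span_induction with
  | mem u hu => exact hU u hu z hz
  | zero => simp
  | add x y _ _ hx hy => simpa only [add_lie] using add_mem hx hy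
  | smul c x _ hx => simpa only [smul_lie] using Submodule.smul_mem _ c hx

end LeftNormed

lemma LieDerivation.lie_mem_eigenspace {R L : Type*} [CommRing R] [LieRing L] [LieAlgebra R L]
    (D : LieDerivation R L L) {x y : L} {μ ν : R}
    (hx : x ∈ Module.End.eigenspace D.toLinearMap μ)
    (hy : y ∈ Module.End.eigenspace D.toLinearMap ν) :
    ⁅x, y⁆ ∈ Module.End.eigenspace D.toLinearMap (μ + ν) := by
  rw [Module.End.mem_eigenspace_iff] at *
  change D ⁅x, y⁆ = _
  change D x = _ at hx
  change D y = _ at hy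
  rw [LieDerivation.apply_lie_eq_add, hx, hy, smul_lie, lie_smul, add_smul, add_comm]

lemma Module.End.mem_span_image_of_mem_eigenspace {R M ι : Type*} [CommRing R] [IsDomain R]
    [AddCommGroup M] [Module R M] [IsTorsionFree R M] {f : Module.End R M} {t : ι → M}
    {w : ι → R} (ht : ∀ i, t i ∈ f.eigenspace (w i)) {v : M}
    (hv : v ∈ Submodule.span R (Set.range t)) {μ : R} (hμ : v ∈ f.eigenspace μ) :
    v ∈ Submodule.span R (t '' {i | w i = μ}) := by
  set W : R → Submodule R M := fun ν => Submodule.span R (t '' {i | w i = ν})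
  have hW : ∀ ν, W ν ≤ f.eigenspace ν := fun ν => by
    rw [Submodule.span_le]
    rintro _ ⟨i, rfl, rfl⟩
    exact ht i
  have hv : v ∈ ⨆ ν, W ν := by
    rw [← Submodule.span_iUnion]
    refine Submodule.span_mono ?_ hv
    rintro _ ⟨i, rfl⟩
    exact Set.mem_iUnion.2 ⟨w i, i, rfl, rfl⟩
  rw [iSup_split_single W μ, Submodule.mem_sup] at hv
  obtain ⟨y, hy, z, hz, rfl⟩ := hv
  have hz_eig : z ∈ f.eigenspace μ := by
    simpa using sub_mem hμ (hW μ hy)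
  have hz_other : z ∈ ⨆ (ν) (_ : ν ≠ μ), f.eigenspace ν :=
    iSup₂_mono (fun ν _ => hW ν) hz
  have : z = 0 := (f.eigenspaces_iSupIndep μ).le_bot ⟨hz_eig, hz_other⟩
  simpa [this] using hy

lemma lie_lie_eq_lie_lie_add {L : Type*} [LieRing L] (u v w : L) :
    ⁅⁅u, v⁆, w⁆ = ⁅⁅u, w⁆, v⁆ + ⁅u, ⁅v, w⁆⁆ := by
  rw [lie_lie, ← lie_skew ⁅u, w⁆ v]
  abel

local notation "𝔞" => FreeMagma.of (0 : Fin 2)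
local notation "𝔟" => FreeMagma.of (1 : Fin 2)

def magmaWeight : FreeMagma (Fin 2) → ℤ
  | .of 0 => 1
  | .of 1 => -1
  | t * u => magmaWeight t + magmaWeight u

lemma magmaToLie_mem_eigenspace (H : LieDerivation ℂ FL FL) (hHa : H genA = genA)
    (hHb : H genB = -genB) (t : FreeMagma (Fin 2)) :
    magmaToLie t ∈ Module.End.eigenspace H.toLinearMap (magmaWeight t : ℂ) := by
  induction t with
  | ih1 i =>
    rw [Module.End.mem_eigenspace_iff]
    fin_cases i
    · change H genA = ((1 : ℤ) : ℂ) • genA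
      simpa using hHa
    · change H genB = ((-1 : ℤ) : ℂ) • genB
      simpa using hHb
  | ih2 t u ht hu =>
    push_cast [magmaWeight]
    exact H.lie_mem_eigenspace ht hu

lemma magmaToLie_mem_leftNormedSpan (t : FreeMagma (Fin 2)) :
    magmaToLie t ∈ leftNormedSpan ℂ {genA, genB} t.length := by
  induction t with
  | ih1 i =>
    refine Submodule.subset_span ?_
    fin_cases i
    · exact Set.mem_insert _ _
    · exact Set.mem_insert_of_mem _ rfl
  | ih2 t u ht hu => exact lie_mem_leftNormedSpan ht hu

lemma homog_le_leftNormedSpan (n : ℕ) : homog n ≤ leftNormedSpan ℂ {genA, genB} n := by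
  rw [homog, Submodule.span_le]
  rintro _ ⟨t, rfl, rfl⟩
  exact magmaToLie_mem_leftNormedSpan t

def baaaa : FL := ⁅baaa, genA⁆
def baaab : FL := ⁅baaa, genB⁆
def baabb : FL := ⁅baab, genB⁆
def babbb : FL := ⁅babb, genB⁆
def ba_baa : FL := ⁅ba, baa⁆
def ba_bab : FL := ⁅ba, bab⁆

def baaaab : FL := ⁅baaaa, genB⁆
def baaabb : FL := ⁅baaab, genB⁆
def baabbb : FL := ⁅baabb, genB⁆
def ba_baaa : FL := ⁅ba, baaa⁆
def ba_baab : FL := ⁅ba, baab⁆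
def ba_babb : FL := ⁅ba, babb⁆

lemma lie_bab_genA : ⁅bab, genA⁆ = baab := by
  rw [bab, lie_lie_eq_lie_lie_add, ← ba, lie_self, add_zero]; rfl

lemma lie_baab_genA : ⁅baab, genA⁆ = baaab - ba_baa := by
  rw [baab, lie_lie_eq_lie_lie_add, ← ba, ← lie_skew baa ba, sub_eq_add_neg]; rfl

lemma lie_babb_genA : ⁅babb, genA⁆ = baabb - ba_bab := by
  rw [babb, lie_lie_eq_lie_lie_add, lie_bab_genA, ← ba, ← lie_skew bab ba, sub_eq_add_neg]; rfl

lemma lie_baaab_genA : ⁅baaab, genA⁆ = baaaab - ba_baaa := by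
  rw [baaab, lie_lie_eq_lie_lie_add, ← ba, ← lie_skew baaa ba, sub_eq_add_neg]; rfl

lemma lie_ba_baa_genA : ⁅ba_baa, genA⁆ = ba_baaa := by
  rw [ba_baa, lie_lie_eq_lie_lie_add, ← baa, lie_self, zero_add]; rfl

lemma lie_ba_baa_genB : ⁅ba_baa, genB⁆ = I6 + ba_baab := by
  rw [ba_baa, lie_lie_eq_lie_lie_add]; rfl

lemma lie_ba_bab_genA : ⁅ba_bab, genA⁆ = ba_baab - I6 := by
  rw [ba_bab, lie_lie_eq_lie_lie_add, ← baa, lie_bab_genA, ← lie_skew, add_comm, sub_eq_add_neg]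
  rfl

lemma lie_ba_bab_genB : ⁅ba_bab, genB⁆ = ba_babb := by
  rw [ba_bab, lie_lie_eq_lie_lie_add, ← bab, lie_self, zero_add]; rfl

lemma lie_baabb_genA : ⁅baabb, genA⁆ = baaabb - (2 : ℂ) • ba_baab - I6 := by
  rw [baabb, lie_lie_eq_lie_lie_add, lie_baab_genA, sub_lie, ← ba, ← lie_skew baab,
    lie_ba_baa_genB]
  change baaabb - (I6 + ba_baab) + -ba_baab = _
  module

lemma lie_babbb_genA : ⁅babbb, genA⁆ = baabbb - (2 : ℂ) • ba_babb := by
  rw [babbb, lie_lie_eq_lie_lie_add, lie_babb_genA, sub_lie, ← ba, ← lie_skew babb,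
    lie_ba_bab_genB]
  change baabbb - ba_babb + -ba_babb = _
  module

def monomials6 : Fin 9 → FreeMagma (Fin 2) :=
  ![𝔟 * 𝔞 * 𝔞 * 𝔞 * 𝔞 * 𝔞, 𝔟 * 𝔞 * 𝔞 * 𝔞 * 𝔞 * 𝔟, 𝔟 * 𝔞 * 𝔞 * 𝔞 * 𝔟 * 𝔟,
    𝔟 * 𝔞 * 𝔞 * 𝔟 * 𝔟 * 𝔟, 𝔟 * 𝔞 * 𝔟 * 𝔟 * 𝔟 * 𝔟, 𝔟 * 𝔞 * (𝔟 * 𝔞 * 𝔞 * 𝔞),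
    𝔟 * 𝔞 * (𝔟 * 𝔞 * 𝔞 * 𝔟), 𝔟 * 𝔞 * (𝔟 * 𝔞 * 𝔟 * 𝔟), 𝔟 * 𝔞 * 𝔟 * (𝔟 * 𝔞 * 𝔞)]

lemma leftNormedSpan_two_le : leftNormedSpan ℂ {genA, genB} 2 ≤ Submodule.span ℂ {ba} := by
  refine leftNormedSpan_add_two_le le_rfl ?_
  rintro u (rfl | rfl) z (rfl | rfl)
  · simp
  · rw [← lie_skew]; exact neg_mem (Submodule.mem_span_singleton_self _)
  · exact Submodule.mem_span_singleton_self _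
  · simp

lemma leftNormedSpan_three_le :
    leftNormedSpan ℂ {genA, genB} 3 ≤ Submodule.span ℂ {baa, bab} := by
  refine leftNormedSpan_add_two_le leftNormedSpan_two_le ?_
  rintro u rfl z (rfl | rfl) <;> exact Submodule.subset_span (by simp [baa, bab])

lemma leftNormedSpan_four_le :
    leftNormedSpan ℂ {genA, genB} 4 ≤ Submodule.span ℂ {baaa, baab, babb} := by
  refine leftNormedSpan_add_two_le leftNormedSpan_three_le ?_
  rintro u (rfl | rfl) z (rfl | rfl)
  all_goals try rw [lie_bab_genA]
  all_goals exact Submodule.subset_span (by simp [baaa, baab, babb])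

lemma leftNormedSpan_five_le : leftNormedSpan ℂ {genA, genB} 5 ≤
    Submodule.span ℂ {baaaa, baaab, baabb, babbb, ba_baa, ba_bab} := by
  refine leftNormedSpan_add_two_le leftNormedSpan_four_le ?_
  have m {x : FL} (hx : x ∈ ({baaaa, baaab, baabb, babbb, ba_baa, ba_bab} : Set FL)) :
      x ∈ Submodule.span ℂ {baaaa, baaab, baabb, babbb, ba_baa, ba_bab} :=
    Submodule.subset_span hx
  rintro u (rfl | rfl | rfl) z (rfl | rfl)
  · exact m (by simp [baaaa])
  · exact m (by simp [baaab])
  · rw [lie_baab_genA]; exact sub_mem (m (by simp)) (m (by simp))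
  · exact m (by simp [baabb])
  · rw [lie_babb_genA]; exact sub_mem (m (by simp)) (m (by simp))
  · exact m (by simp [babbb])

lemma leftNormedSpan_six_le : leftNormedSpan ℂ {genA, genB} 6 ≤
    Submodule.span ℂ (Set.range fun i => magmaToLie (monomials6 i)) := by
  refine leftNormedSpan_add_two_le leftNormedSpan_five_le ?_
  have m (k : Fin 9) : magmaToLie (monomials6 k) ∈
      Submodule.span ℂ (Set.range fun i => magmaToLie (monomials6 i)) :=
    Submodule.subset_span ⟨k, rfl⟩
  rintro u (rfl | rfl | rfl | rfl | rfl | rfl) z (rfl | rfl)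
  · exact m 0
  · exact m 1
  · rw [lie_baaab_genA]; exact sub_mem (m 1) (m 5)
  · exact m 2
  · rw [lie_baabb_genA]; exact sub_mem (sub_mem (m 2) (Submodule.smul_mem _ _ (m 6))) (m 8)
  · exact m 3
  · rw [lie_babbb_genA]; exact sub_mem (m 3) (Submodule.smul_mem _ _ (m 7))
  · exact m 4
  · rw [lie_ba_baa_genA]; exact m 5
  · rw [lie_ba_baa_genB]; exact add_mem (m 8) (m 6)
  · rw [lie_ba_bab_genA]; exact sub_mem (m 6) (m 8)
  · rw [lie_ba_bab_genB]; exact m 7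

lemma homog_six_le_span_monomials6 :
    homog 6 ≤ Submodule.span ℂ (Set.range fun i => magmaToLie (monomials6 i)) :=
  (homog_le_leftNormedSpan 6).trans leftNormedSpan_six_le

section Raising

variable {X : LieDerivation ℂ FL FL} (hXa : X genA = 0) (hXb : X genB = genA)
include hXa hXb

lemma raising_ba : X ba = 0 := by
  rw [ba, X.apply_lie_eq_add, hXa, hXb, lie_zero, lie_self, add_zero]

lemma raising_baa : X baa = 0 := by
  rw [baa, X.apply_lie_eq_add, hXa, raising_ba hXa hXb, lie_zero, zero_lie, add_zero]

lemma raising_bab : X bab = baa := by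
  rw [bab, X.apply_lie_eq_add, hXb, raising_ba hXa hXb, zero_lie, add_zero, baa]

lemma raising_baaa : X baaa = 0 := by
  rw [baaa, X.apply_lie_eq_add, hXa, raising_baa hXa hXb, lie_zero, zero_lie, add_zero]

lemma raising_baab : X baab = baaa := by
  rw [baab, X.apply_lie_eq_add, hXb, raising_baa hXa hXb, zero_lie, add_zero, baaa]

lemma raising_baaab : X baaab = baaaa := by
  rw [baaab, X.apply_lie_eq_add, hXb, raising_baaa hXa hXb, zero_lie, add_zero, baaaa]

lemma raising_baaabb : X baaabb = (2 : ℂ) • baaaab - ba_baaa := by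
  rw [baaabb, X.apply_lie_eq_add, hXb, raising_baaab hXa hXb, lie_baaab_genA, ← baaaab]
  module

lemma raising_ba_baab : X ba_baab = ba_baaa := by
  rw [ba_baab, X.apply_lie_eq_add, raising_ba hXa hXb, raising_baab hXa hXb, zero_lie, add_zero,
    ba_baaa]

lemma raising_I6 : X I6 = 0 := by
  rw [I6, X.apply_lie_eq_add, raising_bab hXa hXb, raising_baa hXa hXb, lie_zero, lie_self,
    add_zero]

end Raising

lemma lowering_I6 {Y : LieDerivation ℂ FL FL} (hYa : Y genA = genB) (hYb : Y genB = 0) :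
    Y I6 = 0 := by
  have hba : Y ba = 0 := by rw [ba, Y.apply_lie_eq_add, hYa, hYb, lie_self, zero_lie, add_zero]
  have hbaa : Y baa = bab := by
    rw [baa, Y.apply_lie_eq_add, hYa, hba, zero_lie, add_zero, bab]
  have hbab : Y bab = 0 := by
    rw [bab, Y.apply_lie_eq_add, hYb, hba, lie_zero, zero_lie, add_zero]
  rw [I6, Y.apply_lie_eq_add, hbaa, hbab, lie_self, zero_lie, add_zero]

lemma I6_mem_invariants {X H Y : LieDerivation ℂ FL FL}
    (hXa : X genA = 0) (hXb : X genB = genA)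
    (hHa : H genA = genA) (hHb : H genB = -genB)
    (hYa : Y genA = genB) (hYb : Y genB = 0) : I6 ∈ invariants X H Y 6 := by
  have hH : I6 ∈ Module.End.eigenspace H.toLinearMap (magmaWeight (monomials6 8) : ℂ) :=
    magmaToLie_mem_eigenspace H hHa hHb (monomials6 8)
  simp [monomials6, magmaWeight] at hH
  exact ⟨⟨⟨Submodule.subset_span ⟨monomials6 8, rfl, rfl⟩, raising_I6 hXa hXb⟩, hH⟩,
    lowering_I6 hYa hYb⟩

lemma mem_span_weight_zero_of_mem_homog_six {H : LieDerivation ℂ FL FL} (hHa : H genA = genA)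
    (hHb : H genB = -genB) {v : FL} (hv : v ∈ homog 6) (hH : H v = 0) :
    v ∈ Submodule.span ℂ {baaabb, ba_baab, I6} := by
  have hweight : {i | (magmaWeight (monomials6 i) : ℂ) = 0} = {2, 6, 8} := by
    ext i
    fin_cases i <;> norm_num [monomials6, magmaWeight, Fin.ext_iff]
  have h := Module.End.mem_span_image_of_mem_eigenspace
    (fun i => magmaToLie_mem_eigenspace H hHa hHb (monomials6 i)) (homog_six_le_span_monomials6 hv)
    (μ := 0) (by simpa using hH)
  rwa [hweight, Set.image_insert_eq, Set.image_insert_eq, Set.image_singleton] at h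

section MatrixRep

attribute [local instance 100] LieRing.ofAssociativeRing

def matrixRep : FL →ₗ⁅ℂ⁆ Matrix (Fin 3) (Fin 3) ℂ :=
  FreeLieAlgebra.lift ℂ ![!![1, 0, 0; 0, 0, 1; 0, 0, 0], !![0, 1, 0; 0, -1, 0; 0, 0, 0]]

lemma matrixRep_I6 : matrixRep I6 = !![0, 0, 1; 0, 0, 0; 0, 0, 0] := by
  simp only [I6, bab, baa, ba, genA, genB, matrixRep, LieHom.map_lie,
    FreeLieAlgebra.lift_of_apply]
  simp [Ring.lie_def, ← Matrix.zero_empty]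

lemma matrixRep_baaaab : matrixRep baaaab = !![0, -1, 0; 0, 0, 0; 0, 0, 0] := by
  simp only [baaaab, baaaa, baaa, baa, ba, genA, genB, matrixRep, LieHom.map_lie,
    FreeLieAlgebra.lift_of_apply]
  simp [Ring.lie_def, ← Matrix.zero_empty]

lemma matrixRep_ba_baaa : matrixRep ba_baaa = !![0, 0, -1; 0, 0, 0; 0, 0, 0] := by
  simp only [ba_baaa, baaa, baa, ba, genA, genB, matrixRep, LieHom.map_lie,
    FreeLieAlgebra.lift_of_apply]
  simp [Ring.lie_def, ← Matrix.zero_empty]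

end MatrixRep

lemma I6_ne_zero : I6 ≠ 0 := by
  intro h
  have := congr_fun₂ matrixRep_I6 0 2
  simp [h] at this

lemma linearIndependent_baaaab_ba_baaa : LinearIndependent ℂ ![baaaab, ba_baaa] := by
  rw [LinearIndependent.pair_iff]
  intro s t hst
  have h := congrArg matrixRep hst
  simp only [map_add, map_smul, map_zero, matrixRep_baaaab, matrixRep_ba_baaa] at h
  exact ⟨by simpa using congr_fun₂ h 0 1, by simpa using congr_fun₂ h 0 2⟩

lemma mem_span_I6_of_raising_eq_zero {X : LieDerivation ℂ FL FL} (hXa : X genA = 0)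
    (hXb : X genB = genA) {v : FL} (hv : v ∈ Submodule.span ℂ {baaabb, ba_baab, I6})
    (hX : X v = 0) : v ∈ Submodule.span ℂ {I6} := by
  obtain ⟨α, w, hw, rfl⟩ := Submodule.mem_span_insert.1 hv
  obtain ⟨β, w', hw', rfl⟩ := Submodule.mem_span_insert.1 hw
  obtain ⟨γ, rfl⟩ := Submodule.mem_span_singleton.1 hw'
  simp only [map_add, map_smul, raising_baaabb hXa hXb, raising_ba_baab hXa hXb,
    raising_I6 hXa hXb, smul_zero, add_zero] at hX
  obtain ⟨hα, hβ⟩ := LinearIndependent.pair_iff.1 linearIndependent_baaaab_ba_baaa (2 * α) (β - α)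
    (by rw [← hX]; module)
  obtain rfl : α = 0 := by simpa using hα
  obtain rfl : β = 0 := by simpa using hβ
  simpa using Submodule.smul_mem _ γ (Submodule.mem_span_singleton_self I6)

/-- For the natural representation of sl₂(ℂ) on the free Lie algebra on `a, b`, the
space of Lie invariants of degree 6 is one-dimensional, spanned by
`I₆ = [[[b,a],b],[[b,a],a]]`. -/
theorem invariants_degree_six
    (X H Y : LieDerivation ℂ FL FL)
    (hXa : X genA = 0) (hXb : X genB = genA)
    (hHa : H genA = genA) (hHb : H genB = -genB)
    (hYa : Y genA = genB) (hYb : Y genB = 0) :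
    invariants X H Y 6 = Submodule.span ℂ {I6} ∧ I6 ≠ (0 : FL) := by
  refine ⟨le_antisymm (fun v hv => ?_) ?_, I6_ne_zero⟩
  · obtain ⟨⟨⟨hv6, hvX⟩, hvH⟩, -⟩ := hv
    exact mem_span_I6_of_raising_eq_zero hXa hXb
      (mem_span_weight_zero_of_mem_homog_six hHa hHb hv6 hvH) hvX
  · exact (Submodule.span_singleton_le_iff_mem _ _).2
      (I6_mem_invariants hXa hXb hHa hHb hYa hYb)
end
end
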